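/- Let 0 < α ≤ 1, let ζ ∈ ℂ with |ζ| = 1, and let h be an analytic function on the open unit disk 𝔻 with h'(z) = (1 − ζz)^α for all z ∈ 𝔻. Then the Schwarzian derivative of h satisfies S_h(z) = −(α(2 + α)/2)·ζ²/(1 − ζz)² for all z ∈ 𝔻, and sup_{z∈𝔻} (1 − |z|²)²·|S_h(z)| = 2α(2 + α). -/

import Mathlib

/-!
The Schwarzian only sees the logarithmic derivative `h''/h'` near a point, and for
`h' = (1 - ζz)^α` this is `-αζ/(1 - ζz)`, which makes `S_h` explicit. For the supremum,
`|1 - ζz| ≥ 1 - |z|` gives `(1 - |z|²)² ≤ 4|1 - ζz|²`, and the bound `4` is approached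
along the radius through `conj ζ`.
-/

open Complex Metric

/-- The Schwarzian derivative `S_h = (h''/h')' - (1/2)(h''/h')²`. -/
noncomputable def schwarzian (h : ℂ → ℂ) : ℂ → ℂ := fun z =>
  deriv (fun w => deriv (deriv h) w / deriv h w) z -
    (1 / 2) * (deriv (deriv h) z / deriv h z) ^ 2

open ComplexConjugate Filter Topology

theorem schwarzian_eq_of_logDeriv_deriv_eventuallyEq {h P : ℂ → ℂ} {z P' : ℂ}
    (hP : logDeriv (deriv h) =ᶠ[𝓝 z] P) (hP' : HasDerivAt P P' z) :
    schwarzian h z = P' - 1 / 2 * P z ^ 2 := by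
  change deriv (logDeriv (deriv h)) z - 1 / 2 * logDeriv (deriv h) z ^ 2 = _
  rw [hP.deriv_eq, hP'.deriv, hP.eq_of_nhds]

theorem one_sub_mul_mem_slitPlane {ζ z : ℂ} (hζ : ‖ζ‖ ≤ 1) (hz : z ∈ ball (0 : ℂ) 1) :
    1 - ζ * z ∈ slitPlane := by
  rw [mem_ball_zero_iff] at hz
  have hζz : ‖ζ * z‖ < 1 := by
    rw [norm_mul]; nlinarith [norm_nonneg ζ, norm_nonneg z]
  refine mem_slitPlane_iff.2 (Or.inl ?_)
  simp only [sub_re, one_re]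
  linarith [re_le_norm (ζ * z)]

theorem hasDerivAt_one_sub_mul (ζ z : ℂ) : HasDerivAt (fun w : ℂ => 1 - ζ * w) (-ζ) z := by
  simpa using ((hasDerivAt_id z).const_mul ζ).const_sub 1

theorem logDeriv_one_sub_mul_cpow {ζ a z : ℂ} (hz : 1 - ζ * z ∈ slitPlane) :
    logDeriv (fun w => (1 - ζ * w) ^ a) z = -a * ζ / (1 - ζ * z) := by
  have hne : 1 - ζ * z ≠ 0 := slitPlane_ne_zero hz
  have hpow : (1 - ζ * z) ^ a ≠ 0 := by simp [cpow_eq_zero_iff, hne]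
  rw [logDeriv_apply, ((hasDerivAt_one_sub_mul ζ z).cpow_const hz).deriv, cpow_sub _ _ hne,
    cpow_one]
  field_simp

theorem schwarzian_of_deriv_eq_one_sub_mul_cpow {ζ a : ℂ} {h : ℂ → ℂ} (hζ : ‖ζ‖ ≤ 1)
    (hh' : ∀ z ∈ ball (0 : ℂ) 1, deriv h z = (1 - ζ * z) ^ a) :
    ∀ z ∈ ball (0 : ℂ) 1, schwarzian h z = -(a * (2 + a) / 2) * ζ ^ 2 / (1 - ζ * z) ^ 2 := by
  intro z hz
  have hP : logDeriv (deriv h) =ᶠ[𝓝 z] fun w => -a * ζ / (1 - ζ * w) := by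
    filter_upwards [isOpen_ball.mem_nhds hz] with w hw
    rw [(logDeriv_congr_nhds (eventually_of_mem (isOpen_ball.mem_nhds hw) hh')).eq_of_nhds,
      logDeriv_one_sub_mul_cpow (one_sub_mul_mem_slitPlane hζ hw)]
  have hne : 1 - ζ * z ≠ 0 := slitPlane_ne_zero (one_sub_mul_mem_slitPlane hζ hz)
  rw [schwarzian_eq_of_logDeriv_deriv_eventuallyEq hP
    ((hasDerivAt_const z (-a * ζ)).div (hasDerivAt_one_sub_mul ζ z) hne)]
  field_simp
  ring

theorem one_sub_norm_sq_sq_div_norm_one_sub_mul_sq_le {ζ z : ℂ} (hζ : ‖ζ‖ ≤ 1)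
    (hz : z ∈ ball (0 : ℂ) 1) : (1 - ‖z‖ ^ 2) ^ 2 / ‖1 - ζ * z‖ ^ 2 ≤ 4 := by
  rw [mem_ball_zero_iff] at hz
  have hlow : 1 - ‖z‖ ≤ ‖1 - ζ * z‖ := by
    have := norm_sub_norm_le (1 : ℂ) (ζ * z)
    rw [norm_one, norm_mul] at this
    nlinarith [norm_nonneg ζ, norm_nonneg z]
  have h0 : 0 ≤ ‖z‖ := norm_nonneg z
  rw [div_le_iff₀ (by nlinarith)]
  calc (1 - ‖z‖ ^ 2) ^ 2 = (1 - ‖z‖) ^ 2 * (1 + ‖z‖) ^ 2 := by ring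
    _ ≤ ‖1 - ζ * z‖ ^ 2 * 2 ^ 2 := by gcongr; linarith
    _ = 4 * ‖1 - ζ * z‖ ^ 2 := by ring

theorem one_sub_norm_sq_sq_div_norm_one_sub_mul_sq_of_conj {ζ : ℂ} (hζ : ‖ζ‖ = 1) {t : ℝ}
    (ht0 : 0 ≤ t) (ht1 : t < 1) :
    (1 - ‖(t : ℂ) * conj ζ‖ ^ 2) ^ 2 / ‖1 - ζ * ((t : ℂ) * conj ζ)‖ ^ 2 = (1 + t) ^ 2 := by
  have hnorm : ‖(t : ℂ) * conj ζ‖ = t := by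
    rw [norm_mul, norm_real, norm_conj, hζ, mul_one, Real.norm_of_nonneg ht0]
  have hrot : ζ * ((t : ℂ) * conj ζ) = t := by
    rw [mul_left_comm, mul_conj, normSq_eq_norm_sq, hζ]
    simp
  have hsub : ‖1 - ζ * ((t : ℂ) * conj ζ)‖ = 1 - t := by
    rw [hrot, ← ofReal_one, ← ofReal_sub, norm_real, Real.norm_of_nonneg (by linarith)]
  rw [hnorm, hsub]
  field_simp [show 1 - t ≠ 0 by linarith]
  ring

theorem iSup_one_sub_norm_sq_sq_div_norm_one_sub_mul_sq {ζ : ℂ} (hζ : ‖ζ‖ = 1) :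
    ⨆ z : ball (0 : ℂ) 1, (1 - ‖(z : ℂ)‖ ^ 2) ^ 2 / ‖1 - ζ * z‖ ^ 2 = 4 := by
  have hle : ∀ z : ball (0 : ℂ) 1, (1 - ‖(z : ℂ)‖ ^ 2) ^ 2 / ‖1 - ζ * z‖ ^ 2 ≤ 4 :=
    fun z => one_sub_norm_sq_sq_div_norm_one_sub_mul_sq_le hζ.le z.2
  have : Nonempty (ball (0 : ℂ) 1) := ⟨⟨0, mem_ball_self one_pos⟩⟩
  refine le_antisymm (ciSup_le hle) ?_
  have hlim : Tendsto (fun t : ℝ => (1 + t) ^ 2) (𝓝[<] 1) (𝓝 4) := by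
    have := ((continuous_const_add (1 : ℝ)).pow 2).tendsto 1
    norm_num at this
    exact this.mono_left nhdsWithin_le_nhds
  refine le_of_tendsto hlim ?_
  filter_upwards [Ioo_mem_nhdsLT zero_lt_one] with t ht
  have hmem : (t : ℂ) * conj ζ ∈ ball (0 : ℂ) 1 := by
    rw [mem_ball_zero_iff, norm_mul, norm_real, norm_conj, hζ, mul_one,
      Real.norm_of_nonneg ht.1.le]
    exact ht.2
  rw [← one_sub_norm_sq_sq_div_norm_one_sub_mul_sq_of_conj hζ ht.1.le ht.2]
  exact le_ciSup ⟨4, Set.forall_mem_range.2 hle⟩ (⟨_, hmem⟩ : ball (0 : ℂ) 1)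

theorem stmt_9_general {α : ℝ} (hα0 : 0 < α) {ζ : ℂ} (hζ : ‖ζ‖ = 1)
    {h : ℂ → ℂ} (hh' : ∀ z ∈ ball (0:ℂ) 1, deriv h z = (1 - ζ * z) ^ (α : ℂ)) :
    (∀ z ∈ ball (0:ℂ) 1,
      schwarzian h z = -((α : ℂ) * (2 + α) / 2) * ζ ^ 2 / (1 - ζ * z) ^ 2) ∧
    (⨆ z : ball (0:ℂ) 1,
      (1 - ‖(z : ℂ)‖ ^ 2) ^ 2 * ‖schwarzian h z‖) =
        2 * α * (2 + α) := by
  have hS := schwarzian_of_deriv_eq_one_sub_mul_cpow hζ.le hh'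
  refine ⟨hS, ?_⟩
  have hnorm : ∀ z : ball (0 : ℂ) 1, (1 - ‖(z : ℂ)‖ ^ 2) ^ 2 * ‖schwarzian h z‖ =
      α * (2 + α) / 2 * ((1 - ‖(z : ℂ)‖ ^ 2) ^ 2 / ‖1 - ζ * z‖ ^ 2) := by
    intro z
    have hcoef : -((α : ℂ) * (2 + α) / 2) = ((-(α * (2 + α) / 2) : ℝ) : ℂ) := by push_cast; ring
    rw [hS z z.2, hcoef, norm_div, norm_mul, norm_pow, norm_pow, hζ, norm_real,
      Real.norm_of_nonpos (by nlinarith)]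
    ring
  rw [iSup_congr hnorm, ← Real.mul_iSup_of_nonneg (by positivity),
    iSup_one_sub_norm_sq_sq_div_norm_one_sub_mul_sq hζ]
  ring

theorem stmt_9 {α : ℝ} (hα0 : 0 < α) (hα1 : α ≤ 1) {ζ : ℂ} (hζ : ‖ζ‖ = 1)
    {h : ℂ → ℂ} (ha : AnalyticOnNhd ℂ h (ball (0:ℂ) 1))
    (hh' : ∀ z ∈ ball (0:ℂ) 1, deriv h z = (1 - ζ * z) ^ (α : ℂ)) :
    (∀ z ∈ ball (0:ℂ) 1,
      schwarzian h z = -((α : ℂ) * (2 + α) / 2) * ζ ^ 2 / (1 - ζ * z) ^ 2) ∧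
    (⨆ z : ball (0:ℂ) 1,
      (1 - ‖(z : ℂ)‖ ^ 2) ^ 2 * ‖schwarzian h z‖) =
        2 * α * (2 + α) :=
  stmt_9_general hα0 hζ hh'
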